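/- For every t > 0, the function f(Q) = (t/8)(1 − |Q|²)² + (h₊/8)(1 + 3|Q|⁴ − 4√6·tr Q³), with h₊ = (3 + √(9+8t))/4, is nonnegative on S₀ and vanishes exactly on the set Q_min = { √(3/2)(n⊗n − I/3) : n ∈ S² }. -/

import Mathlib

open Matrix

noncomputable section

abbrev Mat3 := Matrix (Fin 3) (Fin 3) ℝ

def S0 (Q : Mat3) : Prop := Q.IsSymm ∧ Q.trace = 0

def nsq (Q : Mat3) : ℝ := Matrix.trace (Q * Q)

def tr3 (Q : Mat3) : ℝ := Matrix.trace (Q * Q * Q)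

def unitVec (n : Fin 3 → ℝ) : Prop := ∑ i, (n i) ^ 2 = 1

def uni (s : ℝ) (n : Fin 3 → ℝ) : Mat3 :=
  s • (Matrix.vecMulVec n n - (1 / 3 : ℝ) • (1 : Mat3))

/-- The rescaled bulk potential
`f(Q) = (t/8)(1 − |Q|²)² + (h₊/8)(1 + 3|Q|⁴ − 4√6 tr Q³)`. -/
def fresc (t : ℝ) (Q : Mat3) : ℝ :=
  t / 8 * (1 - nsq Q) ^ 2 +
    (3 + Real.sqrt (9 + 8 * t)) / 4 / 8 * (1 + 3 * (nsq Q) ^ 2 - 4 * Real.sqrt 6 * tr3 Q)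

/-!
Diagonalise `Q` with eigenvalues `a, b, c`, so `a + b + c = 0`, `|Q|² = a² + b² + c²` and
`tr Q³ = a³ + b³ + c³`. For traceless triples `6 (a³ + b³ + c³)² ≤ (a² + b² + c²)³`, so
`x = √6 tr Q³` and `r = |Q|²` satisfy `x² ≤ r³`; since
`(1 + 3r²)² - 16 r³ = (r - 1)² (9r² + 2r + 1)`, this gives `4x ≤ 1 + 3r²`, and both terms of `f`
are nonnegative.

`f` vanishes iff `r = 1` and `x = 1`. Then the elementary symmetric functions of the eigenvalues
are `0, -1/2, 1/(3√6)`, so each eigenvalue is a root of `(√6 λ + 1)² (√6 λ - 2)`, hence of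
`λ² - λ/√6 - 1/3`, and `Q² = Q/√6 + I/3`. Writing `Q = √(3/2) (N - I/3)`, this relation says
exactly that `N` is idempotent; a symmetric idempotent of trace one is `n ⊗ n` with `|n| = 1`.
-/

section Symmetric

variable {ι : Type*} [Fintype ι]

theorem Matrix.IsSymm.eq_zero_of_isIdempotentElem_of_trace_eq_zero {M : Matrix ι ι ℝ}
    (hs : M.IsSymm) (hM : IsIdempotentElem M) (htr : M.trace = 0) : M = 0 := by
  rw [← trace_conjTranspose_mul_self_eq_zero_iff, conjTranspose_eq_transpose_of_trivial, hs.eq,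
    hM.eq, htr]

variable [DecidableEq ι]

theorem Matrix.trace_conjStarAlgAut {R : Type*} [CommRing R] [StarRing R]
    (U : unitary (Matrix ι ι R)) (X : Matrix ι ι R) :
    (Unitary.conjStarAlgAut R _ U X).trace = X.trace := by
  rw [Unitary.conjStarAlgAut_apply, trace_mul_cycle, Unitary.coe_star_mul_self, one_mul]

theorem Matrix.IsSymm.exists_eq_conjStarAlgAut_diagonal {A : Matrix ι ι ℝ} (hA : A.IsSymm) :
    ∃ (U : unitary (Matrix ι ι ℝ)) (e : ι → ℝ),
      A = Unitary.conjStarAlgAut ℝ _ U (diagonal e) := by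
  have hH : A.IsHermitian := by rwa [IsHermitian, conjTranspose_eq_transpose_of_trivial]
  exact ⟨hH.eigenvectorUnitary, hH.eigenvalues, hH.spectral_theorem⟩

open Polynomial in
theorem Matrix.IsSymm.exists_trace_pow_eq_sum_and_aeval_eq_zero {A : Matrix ι ι ℝ}
    (hA : A.IsSymm) :
    ∃ e : ι → ℝ, (∀ k : ℕ, (A ^ k).trace = ∑ i, e i ^ k) ∧
      ∀ p : ℝ[X], (∀ i, p.IsRoot (e i)) → aeval A p = 0 := by
  obtain ⟨U, e, rfl⟩ := hA.exists_eq_conjStarAlgAut_diagonal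
  refine ⟨e, fun k => ?_, fun p hp => ?_⟩
  · rw [← map_pow, trace_conjStarAlgAut, diagonal_pow, trace_diagonal]
    rfl
  · have hdiag : aeval (diagonal e) p = 0 := by
      rw [← diagonalAlgHom_apply (R := ℝ), aeval_algHom_apply, aeval_pi_apply]
      simp [funext hp]
    rw [aeval_algHom_apply, hdiag, map_zero]

theorem Matrix.IsSymm.exists_eq_vecMulVec_of_isIdempotentElem {P : Matrix ι ι ℝ}
    (hs : P.IsSymm) (hP : IsIdempotentElem P) (htr : P.trace = 1) :
    ∃ v : ι → ℝ, v ⬝ᵥ v = 1 ∧ P = vecMulVec v v := by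
  obtain ⟨j, -, hj⟩ : ∃ j ∈ Finset.univ, P j j ≠ 0 :=
    Finset.exists_ne_zero_of_sum_ne_zero (by simpa [trace] using htr.trans_ne one_ne_zero)
  set u := P *ᵥ Pi.single j 1 with hu
  have hPu : P *ᵥ u = u := by rw [hu, mulVec_mulVec, hP.eq]
  have huu : u ⬝ᵥ u = P j j := by
    conv_lhs => rw [hu]
    rw [dotProduct_mulVec, ← mulVec_transpose, hs.eq, hPu, hu]
    simp
  have hpos : 0 < P j j :=
    (huu ▸ (by simpa using dotProduct_star_self_nonneg u : 0 ≤ u ⬝ᵥ u)).lt_of_ne' hj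
  set v := (√(P j j))⁻¹ • u
  have hvv : v ⬝ᵥ v = 1 := by
    simp only [v, smul_dotProduct, dotProduct_smul, huu, smul_eq_mul]
    rw [← mul_assoc, ← mul_inv, Real.mul_self_sqrt hpos.le, inv_mul_cancel₀ hpos.ne']
  have hPv : P *ᵥ v = v := by simp only [v, mulVec_smul, hPu]
  -- `P - v ⊗ v` is again a symmetric idempotent, and its trace is `1 - |v|² = 0`.
  refine ⟨v, hvv, sub_eq_zero.mp ?_⟩
  apply IsSymm.eq_zero_of_isIdempotentElem_of_trace_eq_zero
  · exact hs.sub (by rw [IsSymm, transpose_vecMulVec])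
  · rw [IsIdempotentElem, sub_mul, mul_sub, mul_sub, hP.eq, mul_vecMulVec, vecMulVec_mul,
      ← mulVec_transpose, hs.eq, hPv, vecMulVec_mul_vecMulVec, hvv, one_smul]
    abel
  · rw [trace_sub, trace_vecMulVec, htr, hvv, sub_self]

end Symmetric

theorem sq_sum_cubes_le_of_sum_eq_zero {a b c : ℝ} (h : a + b + c = 0) :
    6 * (a ^ 3 + b ^ 3 + c ^ 3) ^ 2 ≤ (a ^ 2 + b ^ 2 + c ^ 2) ^ 3 := by
  obtain rfl : c = -a - b := by linarith
  nlinarith [sq_nonneg ((a - b) * (2 * a + b) * (a + 2 * b))]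

theorem four_mul_le_of_sq_le_cube {x r : ℝ} (hr : 0 ≤ r) (h : x ^ 2 ≤ r ^ 3) :
    4 * x ≤ 1 + 3 * r ^ 2 := by
  have hsq : (4 * x) ^ 2 ≤ (1 + 3 * r ^ 2) ^ 2 := by
    nlinarith [mul_nonneg (sq_nonneg (r - 1)) (by positivity : 0 ≤ 9 * r ^ 2 + 2 * r + 1)]
  exact (abs_le_of_sq_le_sq' hsq (by positivity)).2

theorem sq_eq_of_power_sums {w a b c : ℝ} (hw : w ^ 2 = 6) (h1 : a + b + c = 0)
    (h2 : a ^ 2 + b ^ 2 + c ^ 2 = 1) (h3 : w * (a ^ 3 + b ^ 3 + c ^ 3) = 1) :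
    a ^ 2 = w / 6 * a + 1 / 3 := by
  have e2 : a * b + b * c + c * a = -1 / 2 := by
    linear_combination (a + b + c) / 2 * h1 - 1 / 2 * h2
  have e3 : 3 * w * (a * b * c) = 1 := by
    linear_combination h3 - w * (a ^ 2 + b ^ 2 + c ^ 2 - a * b - b * c - c * a) * h1
  have hcubic : 3 * w * a ^ 3 - 3 * w * (a / 2) - 1 = 0 := by
    linear_combination 3 * w * a ^ 2 * h1 - 3 * w * a * e2 + e3
  have hfact : (w * a + 1) ^ 2 * (w * a - 2) = 0 := by
    linear_combination w ^ 2 / 3 * hcubic + (a * w / 2 + 1 / 3) * hw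
  rcases mul_eq_zero.mp hfact with h | h
  · linear_combination (a * w - 2) / 6 * (pow_eq_zero_iff two_ne_zero).mp h - a ^ 2 / 6 * hw
  · linear_combination (a * w + 1) / 6 * h - a ^ 2 / 6 * hw

theorem sq_eq_smul_add_smul_one_iff_isIdempotentElem {A : Type*} [Ring A] [Algebra ℝ A] {w : ℝ}
    (hw : w ^ 2 = 6) (N : A) :
    ((w / 2) • (N - (1 / 3 : ℝ) • 1)) ^ 2 =
        (w / 6) • ((w / 2) • (N - (1 / 3 : ℝ) • 1)) + (1 / 3 : ℝ) • 1 ↔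
      IsIdempotentElem N := by
  have key : ((w / 2) • (N - (1 / 3 : ℝ) • 1)) ^ 2 - (w / 6) • ((w / 2) • (N - (1 / 3 : ℝ) • 1))
      - (1 / 3 : ℝ) • 1 = (3 / 2 : ℝ) • (N * N - N) := by
    simp only [sq, sub_mul, mul_sub, smul_mul_assoc, mul_smul_comm, one_mul, mul_one, smul_sub,
      smul_smul]
    match_scalars
    · linear_combination hw / 4
    · linear_combination -hw / 4
    · linear_combination hw / 18
  rw [← sub_eq_zero, ← sub_sub, key, smul_eq_zero, sub_eq_zero, or_iff_right (by norm_num)]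
  rfl

theorem Real.sqrt_three_div_two : √(3 / 2) = √6 / 2 := by
  rw [show (3 / 2 : ℝ) = 6 / 2 ^ 2 by norm_num, Real.sqrt_div' _ (by positivity),
    Real.sqrt_sq zero_le_two]

theorem unitVec_iff_dotProduct_self {n : Fin 3 → ℝ} : unitVec n ↔ n ⬝ᵥ n = 1 := by
  simp only [unitVec, dotProduct, sq]

theorem uni_sqrt_three_div_two (n : Fin 3 → ℝ) :
    uni (√(3 / 2)) n = (√6 / 2) • (vecMulVec n n - (1 / 3 : ℝ) • 1) := by
  rw [uni, Real.sqrt_three_div_two]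

open Polynomial in
theorem exists_eigenvalues_of_S0 {Q : Mat3} (hQ : S0 Q) :
    ∃ e : Fin 3 → ℝ, e 0 + e 1 + e 2 = 0 ∧ nsq Q = e 0 ^ 2 + e 1 ^ 2 + e 2 ^ 2 ∧
      tr3 Q = e 0 ^ 3 + e 1 ^ 3 + e 2 ^ 3 ∧
      ∀ p : ℝ[X], (∀ i, p.IsRoot (e i)) → aeval Q p = 0 := by
  obtain ⟨e, he, hroot⟩ := hQ.1.exists_trace_pow_eq_sum_and_aeval_eq_zero
  have h1 := he 1
  have h2 := he 2
  have h3 := he 3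
  simp only [pow_one, hQ.2, Fin.sum_univ_three] at h1 h2 h3
  rw [sq, ← nsq] at h2
  rw [pow_three', ← tr3] at h3
  exact ⟨e, h1.symm, h2, h3, hroot⟩

theorem four_mul_sqrt_six_mul_tr3_le {Q : Mat3} (hQ : S0 Q) :
    4 * √6 * tr3 Q ≤ 1 + 3 * nsq Q ^ 2 := by
  obtain ⟨e, h1, h2, h3, -⟩ := exists_eigenvalues_of_S0 hQ
  rw [mul_assoc]
  apply four_mul_le_of_sq_le_cube (h2 ▸ by positivity)
  rw [mul_pow, Real.sq_sqrt (by norm_num), h2, h3]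
  exact sq_sum_cubes_le_of_sum_eq_zero h1

open Polynomial in
theorem sq_eq_of_nsq_eq_one {Q : Mat3} (hQ : S0 Q) (h1 : nsq Q = 1) (h3 : √6 * tr3 Q = 1) :
    Q ^ 2 = (√6 / 6) • Q + (1 / 3 : ℝ) • 1 := by
  have hw : √6 ^ 2 = 6 := Real.sq_sqrt (by norm_num)
  obtain ⟨e, s1, s2, s3, hroot⟩ := exists_eigenvalues_of_S0 hQ
  rw [h1] at s2
  rw [s3] at h3
  have hroots : ∀ i, e i ^ 2 = √6 / 6 * e i + 1 / 3
    | 0 => sq_eq_of_power_sums hw s1 s2.symm h3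
    | 1 => sq_eq_of_power_sums (b := e 0) (c := e 2) hw (by linarith) (by linarith) (by linarith)
    | 2 => sq_eq_of_power_sums (b := e 0) (c := e 1) hw (by linarith) (by linarith) (by linarith)
  have := hroot (X ^ 2 - C (√6 / 6) * X - C (1 / 3)) fun i => by
    simp [hroots i]
  simpa [Algebra.algebraMap_eq_smul_one, sub_sub, sub_eq_zero] using this

theorem nsq_eq_one_of_sq_eq {Q : Mat3} (htr : Q.trace = 0)
    (hsq : Q ^ 2 = (√6 / 6) • Q + (1 / 3 : ℝ) • 1) : nsq Q = 1 ∧ √6 * tr3 Q = 1 := by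
  have hw : √6 ^ 2 = 6 := Real.sq_sqrt (by norm_num)
  have hcube : Q * Q * Q = (√6 / 6) • ((√6 / 6) • Q + (1 / 3 : ℝ) • 1) + (1 / 3 : ℝ) • Q := by
    rw [← sq, hsq, add_mul, smul_mul_assoc, smul_one_mul, ← sq, hsq]
  constructor
  · rw [nsq, ← sq, hsq]
    simp [htr]
  · rw [tr3, hcube]
    simp only [trace_add, trace_smul, trace_one, htr, Fintype.card_fin, smul_eq_mul]
    linear_combination hw / 6

theorem exists_uni_iff_sq_eq {Q : Mat3} (hQ : S0 Q) :
    (∃ n, unitVec n ∧ Q = uni (√(3 / 2)) n) ↔ Q ^ 2 = (√6 / 6) • Q + (1 / 3 : ℝ) • 1 := by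
  have hw : √6 ^ 2 = 6 := Real.sq_sqrt (by norm_num)
  constructor
  · rintro ⟨n, hn, rfl⟩
    rw [uni_sqrt_three_div_two, sq_eq_smul_add_smul_one_iff_isIdempotentElem hw,
      IsIdempotentElem, vecMulVec_mul_vecMulVec, unitVec_iff_dotProduct_self.mp hn, one_smul]
  · intro hsq
    set N : Mat3 := (1 / 3 : ℝ) • (1 + √6 • Q) with hN
    have hQN : Q = (√6 / 2) • (N - (1 / 3 : ℝ) • 1) := by
      rw [hN, smul_add, add_sub_cancel_left, smul_smul, smul_smul,
        show √6 / 2 * (1 / 3) * √6 = 1 by linear_combination hw / 6, one_smul]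
    rw [hQN, sq_eq_smul_add_smul_one_iff_isIdempotentElem hw] at hsq
    have hNsymm : N.IsSymm := (isSymm_one.add (hQ.1.smul _)).smul _
    have hNtr : N.trace = 1 := by simp [hN, hQ.2]
    obtain ⟨n, hn, hNn⟩ := hNsymm.exists_eq_vecMulVec_of_isIdempotentElem hsq hNtr
    exact ⟨n, unitVec_iff_dotProduct_self.mpr hn, by rw [hQN, hNn, uni_sqrt_three_div_two]⟩

theorem stmt6 (t : ℝ) (ht : 0 < t) (Q : Mat3) (hQ : S0 Q) :
    0 ≤ fresc t Q ∧
    (fresc t Q = 0 ↔ ∃ n : Fin 3 → ℝ, unitVec n ∧ Q = uni (Real.sqrt (3 / 2)) n) := by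
  set h := (3 + √(9 + 8 * t)) / 4 / 8
  have hh : 0 < h := by positivity
  have hA : 0 ≤ t / 8 * (1 - nsq Q) ^ 2 := by positivity
  have hB : 0 ≤ h * (1 + 3 * nsq Q ^ 2 - 4 * √6 * tr3 Q) :=
    mul_nonneg hh.le (sub_nonneg.mpr (four_mul_sqrt_six_mul_tr3_le hQ))
  refine ⟨add_nonneg hA hB, ?_⟩
  rw [exists_uni_iff_sq_eq hQ, fresc, add_eq_zero_iff_of_nonneg hA hB]
  constructor
  · rintro ⟨hA0, hB0⟩
    rw [mul_eq_zero, or_iff_right (by positivity), sq_eq_zero_iff, sub_eq_zero] at hA0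
    rw [← hA0, mul_eq_zero, or_iff_right hh.ne'] at hB0
    exact sq_eq_of_nsq_eq_one hQ hA0.symm (by linarith)
  · intro hsq
    obtain ⟨h1, h3⟩ := nsq_eq_one_of_sq_eq hQ.2 hsq
    rw [h1, mul_assoc, h3]
    norm_num
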